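/- Bárány–Füredi theorem (ellipsoid form): there is an absolute constant C > 0 such that if E is an ellipsoid in R^m, s ≥ m+1, and w_1, …, w_s ∈ E, then (|conv(w_1,…,w_s)| / |E|)^{1/m} ≤ C √(log(1 + s/m)/m). -/

import Mathlib

/-!
By affine invariance the points may be taken in the unit ball. Maurey's empirical method puts
every point of their convex hull within `1/√k` of the average of some `k` of the points,
repetitions allowed, so the hull is covered by `C(s+k-1, k)` balls of radius `1/√k`. For
`k = ⌈m / log (1 + s/m)⌉` there are at most `e^{7m}` such balls.
-/

open MeasureTheory Metric Set

noncomputable section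

/-- Euclidean space ℝ^m. -/
abbrev En (m : ℕ) := EuclideanSpace ℝ (Fin m)

open scoped RealInnerProductSpace Pointwise

section Maurey

variable {E ι : Type*} [NormedAddCommGroup E] [InnerProductSpace ℝ E]
  {t : Finset ι} {w : ι → ℝ} {y : ι → E}

theorem sum_mul_norm_add_sq_of_sum_smul_eq_zero (hw₁ : ∑ i ∈ t, w i = 1)
    (hy : ∑ i ∈ t, w i • y i = 0) (v : E) :
    ∑ i ∈ t, w i * ‖v + y i‖ ^ 2 = ‖v‖ ^ 2 + ∑ i ∈ t, w i * ‖y i‖ ^ 2 := by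
  have hcross : ∑ i ∈ t, w i * ⟪v, y i⟫ = 0 := by
    simp_rw [← real_inner_smul_right, ← inner_sum, hy, inner_zero_right]
  simp_rw [norm_add_sq_real, mul_add, Finset.sum_add_distrib, ← Finset.sum_mul, hw₁,
    mul_left_comm _ (2 : ℝ), ← Finset.mul_sum, hcross]
  ring

theorem exists_norm_add_sq_le (hw₀ : ∀ i ∈ t, 0 ≤ w i) (hw₁ : ∑ i ∈ t, w i = 1)
    (hy : ∑ i ∈ t, w i • y i = 0) (v : E) :
    ∃ i ∈ t, ‖v + y i‖ ^ 2 ≤ ‖v‖ ^ 2 + ∑ i ∈ t, w i * ‖y i‖ ^ 2 := by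
  obtain ⟨i, hi, hle⟩ := (concaveOn_id convex_univ).exists_le_of_centerMass hw₀
    (hw₁ ▸ one_pos) (fun i _ ↦ mem_univ (‖v + y i‖ ^ 2))
  refine ⟨i, hi, ?_⟩
  simpa [Finset.centerMass_eq_of_sum_1 _ _ hw₁,
    sum_mul_norm_add_sq_of_sum_smul_eq_zero hw₁ hy] using hle

/-- Maurey's empirical method, derandomised: each new summand can be chosen so that the squared
norm of the sum grows by at most the variance `∑ w i ‖y i‖²`. -/
theorem exists_norm_sum_comp_sq_le (hw₀ : ∀ i ∈ t, 0 ≤ w i) (hw₁ : ∑ i ∈ t, w i = 1)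
    (hy : ∑ i ∈ t, w i • y i = 0) (k : ℕ) :
    ∃ f : Fin k → ι, ‖∑ j, y (f j)‖ ^ 2 ≤ k * ∑ i ∈ t, w i * ‖y i‖ ^ 2 := by
  induction k with
  | zero => exact ⟨Fin.elim0, by simp⟩
  | succ k ih =>
    obtain ⟨f, hf⟩ := ih
    obtain ⟨i, -, hi⟩ := exists_norm_add_sq_le hw₀ hw₁ hy (∑ j, y (f j))
    refine ⟨Fin.snoc f i, ?_⟩
    simp only [Fin.sum_univ_castSucc, Fin.snoc_castSucc, Fin.snoc_last, Nat.cast_succ]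
    linarith

theorem exists_dist_average_le_of_mem_convexHull {u : ι → E} {R : ℝ}
    (hu : ∀ i, ‖u i‖ ≤ R) {x : E} (hx : x ∈ convexHull ℝ (range u)) {k : ℕ} (hk : k ≠ 0) :
    ∃ f : Fin k → ι, dist x ((k : ℝ)⁻¹ • ∑ j, u (f j)) ≤ R / √k := by
  rw [convexHull_range_eq_exists_affineCombination] at hx
  obtain ⟨t, w, hw₀, hw₁, rfl⟩ := hx
  set x := t.affineCombination ℝ u w
  have hx : ∑ i ∈ t, w i • u i = x :=
    (t.affineCombination_eq_linear_combination u w hw₁).symm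
  have hy : ∑ i ∈ t, w i • (u i - x) = 0 := by
    simp_rw [smul_sub, Finset.sum_sub_distrib, ← Finset.sum_smul, hw₁, one_smul, hx, sub_self]
  have hvar : ∑ i ∈ t, w i * ‖u i - x‖ ^ 2 ≤ R ^ 2 := by
    have hsplit : ∑ i ∈ t, w i * ‖u i‖ ^ 2 = ‖x‖ ^ 2 + ∑ i ∈ t, w i * ‖u i - x‖ ^ 2 := by
      simpa using sum_mul_norm_add_sq_of_sum_smul_eq_zero hw₁ hy x
    have hle : ∑ i ∈ t, w i * ‖u i‖ ^ 2 ≤ ∑ i ∈ t, w i * R ^ 2 :=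
      Finset.sum_le_sum fun i hi ↦ mul_le_mul_of_nonneg_left
        (pow_le_pow_left₀ (norm_nonneg _) (hu i) 2) (hw₀ i hi)
    rw [← Finset.sum_mul, hw₁, one_mul] at hle
    linarith [sq_nonneg ‖x‖]
  obtain ⟨f, hf⟩ := exists_norm_sum_comp_sq_le hw₀ hw₁ hy k
  refine ⟨f, ?_⟩
  have hR : 0 ≤ R := by
    obtain ⟨i, -⟩ := Finset.nonempty_of_sum_ne_zero (hw₁ ▸ one_ne_zero)
    exact (norm_nonneg _).trans (hu i)
  have hk₀ : (0 : ℝ) < k := by positivity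
  have hsum : ∑ j, (u (f j) - x) = (k : ℝ) • ((k : ℝ)⁻¹ • ∑ j, u (f j) - x) := by
    rw [smul_sub, smul_inv_smul₀ hk₀.ne', Finset.sum_sub_distrib, Finset.sum_const,
      Finset.card_univ, Fintype.card_fin, Nat.cast_smul_eq_nsmul]
  have hnorm : ‖∑ j, (u (f j) - x)‖ ≤ √k * R := by
    refine (pow_le_pow_iff_left₀ (norm_nonneg _) (by positivity) two_ne_zero).1 ?_
    rw [mul_pow, Real.sq_sqrt hk₀.le]
    exact hf.trans (mul_le_mul_of_nonneg_left hvar hk₀.le)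
  rw [hsum, norm_smul, Real.norm_natCast, ← dist_eq_norm, dist_comm] at hnorm
  calc _ ≤ √k * R / k := by rw [le_div_iff₀ hk₀, mul_comm]; exact hnorm
    _ = R / √k := by rw [mul_div_right_comm, Real.sqrt_div_self', one_div_mul_eq_div]

theorem convexHull_subset_iUnion_closedBall_sym {u : ι → E} {R : ℝ}
    (hu : ∀ i, ‖u i‖ ≤ R) {k : ℕ} (hk : k ≠ 0) :
    convexHull ℝ (range u) ⊆
      ⋃ σ : Sym ι k, closedBall ((k : ℝ)⁻¹ • (σ.1.map u).sum) (R / √k) := by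
  intro x hx
  obtain ⟨f, hf⟩ := exists_dist_average_le_of_mem_convexHull hu hx hk
  refine mem_iUnion.2 ⟨⟨Finset.univ.val.map f, by simp⟩, ?_⟩
  rw [mem_closedBall, Multiset.map_map, ← Finset.sum_eq_multiset_sum]
  exact hf

end Maurey

section Volume

variable {E : Type*} [NormedAddCommGroup E] [NormedSpace ℝ E] [FiniteDimensional ℝ E]
  [MeasurableSpace E] [BorelSpace E] (μ : Measure E) [μ.IsAddHaarMeasure]

theorem measure_le_card_mul_of_subset_iUnion_closedBall {κ : Type*} [Fintype κ] {A : Set E}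
    {c : κ → E} {r : ℝ} (hr : 0 ≤ r) (hA : A ⊆ ⋃ i, closedBall (c i) r) :
    μ A ≤
      Fintype.card κ * (ENNReal.ofReal (r ^ Module.finrank ℝ E) * μ (closedBall 0 1)) := by
  calc μ A ≤ ∑ i, μ (closedBall (c i) r) :=
        (measure_mono hA).trans (measure_iUnion_fintype_le _ _)
    _ = _ := by simp [Measure.addHaar_closedBall' μ _ hr]

theorem addHaar_image_affineMap (f : E →ᵃ[ℝ] E) (s : Set E) :
    μ (f '' s) = ENNReal.ofReal |LinearMap.det f.linear| * μ s := by
  have : f '' s = f 0 +ᵥ f.linear '' s := by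
    rw [← image_vadd, image_image]
    exact image_congr fun a _ ↦ by simpa [add_comm] using f.map_vadd 0 a
  rw [this, measure_vadd, Measure.addHaar_image_linearMap]

theorem toReal_addHaar_image_div_image (f : E ≃ᵃ[ℝ] E) (s t : Set E) :
    (μ (f '' s)).toReal / (μ (f '' t)).toReal = (μ s).toReal / (μ t).toReal := by
  have hdet : 0 < |LinearMap.det f.toAffineMap.linear| :=
    abs_pos.2 (LinearEquiv.isUnit_det' f.linear).ne_zero
  simp only [show ⇑f = ⇑f.toAffineMap from rfl, addHaar_image_affineMap, ENNReal.toReal_mul,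
    ENNReal.toReal_ofReal hdet.le]
  exact mul_div_mul_left _ _ hdet.ne'

end Volume

section

variable {E : Type*} [NormedAddCommGroup E] [InnerProductSpace ℝ E] [FiniteDimensional ℝ E]
  [MeasurableSpace E] [BorelSpace E] (μ : Measure E) [μ.IsAddHaarMeasure]

theorem toReal_measure_convexHull_div_le {ι : Type*} [Fintype ι] [DecidableEq ι] {u : ι → E}
    (hu : ∀ i, ‖u i‖ ≤ 1) {k : ℕ} (hk : k ≠ 0) :
    (μ (convexHull ℝ (range u))).toReal / (μ (closedBall 0 1)).toReal ≤
      (Fintype.card ι + k - 1).choose k * (√k)⁻¹ ^ Module.finrank ℝ E := by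
  have hB : 0 < (μ (closedBall (0 : E) 1)).toReal :=
    ENNReal.toReal_pos (measure_closedBall_pos μ 0 one_pos).ne' measure_closedBall_lt_top.ne
  have hcover := measure_le_card_mul_of_subset_iUnion_closedBall μ (by positivity)
    (convexHull_subset_iUnion_closedBall_sym hu hk)
  replace hcover := ENNReal.toReal_mono (ENNReal.mul_ne_top (ENNReal.natCast_ne_top _)
    (ENNReal.mul_ne_top ENNReal.ofReal_ne_top measure_closedBall_lt_top.ne)) hcover
  rw [ENNReal.toReal_mul, ENNReal.toReal_mul, ENNReal.toReal_natCast, ENNReal.toReal_ofReal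
    (by positivity), Sym.card_sym_eq_choose, one_div] at hcover
  rw [div_le_iff₀ hB]
  linarith

end

open Nat in
theorem Nat.choose_le_exp_one_mul_div_pow (n k : ℕ) :
    (n.choose k : ℝ) ≤ (Real.exp 1 * n / k) ^ k := by
  rcases eq_or_ne k 0 with rfl | hk
  · simp
  calc (n.choose k : ℝ) ≤ n ^ k / k ! := Nat.choose_le_pow_div k n
    _ = (n / k) ^ k * (k ^ k / k !) := by rw [div_pow, div_mul_div_cancel₀ (by positivity)]
    _ ≤ (n / k) ^ k * Real.exp 1 ^ k := by
      rw [Real.exp_one_pow]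
      gcongr
      exact Real.pow_div_factorial_le_exp _ (Nat.cast_nonneg k) k
    _ = (Real.exp 1 * n / k) ^ k := by rw [← mul_pow]; ring

open Real in
theorem exp_one_mul_add_div_pow_le {m s k : ℕ} (hm : m ≠ 0) (hs : m ≤ s)
    (hk_lo : m / log (1 + s / m) ≤ k) (hk_hi : k ≤ 2 * m / log (1 + s / m)) :
    (exp 1 * (s + k) / k) ^ k ≤ exp (7 * m) := by
  set x : ℝ := s / m
  set L := log (1 + x)
  have hm₀ : (0 : ℝ) < m := by positivity
  have hx : 1 ≤ x := (one_le_div hm₀).2 (by exact_mod_cast hs)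
  have hL : 2 / 3 < L := by
    have := Real.log_two_gt_d9
    have := Real.log_le_log two_pos (show (2 : ℝ) ≤ 1 + x by linarith)
    linarith
  have hLx : L ≤ x := by linarith [Real.log_le_sub_one_of_pos (show 0 < 1 + x by linarith)]
  have hk₀ : (0 : ℝ) < k := lt_of_lt_of_le (by positivity) hk_lo
  have hkL : m ≤ k * L := by rwa [div_le_iff₀ (by linarith)] at hk_lo
  have hkL' : k * L ≤ 2 * m := by rwa [le_div_iff₀ (by linarith)] at hk_hi
  have hbase : exp 1 * (s + k) / k ≤ exp (1 + 2 * L) := by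
    have hsk : (s + k) / k ≤ 1 + x * x := by
      have hs : (s : ℝ) = x * m := (div_mul_cancel₀ _ hm₀.ne').symm
      rw [div_le_iff₀ hk₀]
      nlinarith [mul_le_mul_of_nonneg_left hkL (by linarith : (0 : ℝ) ≤ x),
        mul_le_mul_of_nonneg_left hLx (by positivity : (0 : ℝ) ≤ k * x)]
    have h2L : exp (2 * L) = (1 + x) ^ 2 := by
      rw [mul_comm, exp_mul, exp_log (by linarith)]; norm_cast
    rw [exp_add, h2L, mul_div_assoc]
    gcongr
    nlinarith
  calc (exp 1 * (s + k) / k) ^ k ≤ exp (1 + 2 * L) ^ k := by gcongr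
    _ = exp (k * (1 + 2 * L)) := by rw [← exp_nat_mul]
    _ ≤ exp (7 * m) := exp_le_exp.2 (by nlinarith [mul_lt_mul_of_pos_left hL hk₀])

open Real in
theorem volume_convexHull_div_volume_ball_le {m s : ℕ} (hm : m ≠ 0) (hs : m ≤ s)
    {u : Fin s → En m} (hu : ∀ i, ‖u i‖ ≤ 1) :
    (volume (convexHull ℝ (range u))).toReal / (volume (closedBall (0 : En m) 1)).toReal ≤
      (exp 7 * √(log (1 + s / m) / m)) ^ m := by
  set L := log (1 + s / m)
  have hm₀ : (0 : ℝ) < m := by positivity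
  have hx : 1 ≤ (s : ℝ) / m := (one_le_div hm₀).2 (by exact_mod_cast hs)
  have hL : 0 < L := log_pos (by linarith)
  rcases le_or_gt (m : ℝ) L with hmL | hLm
  · have hsub : convexHull ℝ (range u) ⊆ closedBall 0 1 :=
      convexHull_min (range_subset_iff.2 fun i ↦ mem_closedBall_zero_iff.2 (hu i))
        (convex_closedBall 0 1)
    refine (div_le_one_of_le₀ (ENNReal.toReal_mono measure_closedBall_lt_top.ne
      (measure_mono hsub)) ENNReal.toReal_nonneg).trans (one_le_pow₀ ?_)
    exact one_le_mul_of_one_le_of_one_le (one_le_exp (by norm_num))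
      (one_le_sqrt.2 ((one_le_div hm₀).2 hmL))
  set k := ⌈m / L⌉₊
  have hmL : 1 ≤ m / L := (one_le_div hL).2 hLm.le
  have hk_lo : m / L ≤ k := Nat.le_ceil _
  have hk_hi : k ≤ 2 * m / L := by
    rw [mul_div_assoc]
    linarith [Nat.ceil_lt_add_one (by positivity : 0 ≤ m / L)]
  have hk : k ≠ 0 := by positivity
  have hr : (√k)⁻¹ ≤ √(L / m) := by
    rw [← inv_div, sqrt_inv]
    exact inv_anti₀ (by positivity) (sqrt_le_sqrt hk_lo)
  have hN : ((s + k - 1).choose k : ℝ) ≤ exp (7 * m) := by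
    refine (Nat.choose_le_exp_one_mul_div_pow _ k).trans
      (le_trans ?_ (exp_one_mul_add_div_pow_le hm hs hk_lo hk_hi))
    gcongr
    exact_mod_cast Nat.sub_le _ _
  calc _ ≤ ((s + k - 1).choose k : ℝ) * (√k)⁻¹ ^ m := by
        simpa using toReal_measure_convexHull_div_le volume hu hk
    _ ≤ exp (7 * m) * √(L / m) ^ m := by gcongr
    _ = (exp 7 * √(L / m)) ^ m := by rw [mul_pow, ← exp_nat_mul, mul_comm (m : ℝ)]

/-- The Bárány–Füredi theorem (ellipsoid form): there is an absolute constant C > 0 such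
that if E is an ellipsoid in ℝ^m (image of the unit ball under an invertible affine map),
s ≥ m+1, and w₁,…,w_s ∈ E, then (|conv(w₁,…,w_s)|/|E|)^{1/m} ≤ C √(log(1+s/m)/m). -/
theorem barany_furedi :
    ∃ C : ℝ, 0 < C ∧
      ∀ (m s : ℕ), 1 ≤ m → m + 1 ≤ s →
        ∀ T : En m ≃ᵃ[ℝ] En m, ∀ w : Fin s → En m,
          (∀ i, w i ∈ T '' closedBall (0 : En m) 1) →
          ((volume (convexHull ℝ (Set.range w))).toReal /
              (volume (T '' closedBall (0 : En m) 1)).toReal) ^ ((1:ℝ)/(m:ℝ))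
            ≤ C * Real.sqrt (Real.log (1 + (s:ℝ)/(m:ℝ)) / (m:ℝ)) := by
  refine ⟨Real.exp 7, Real.exp_pos 7, fun m s hm hs T w hw ↦ ?_⟩
  have hu : ∀ i, ‖T.symm (w i)‖ ≤ 1 := fun i ↦ by
    obtain ⟨y, hy, hTy⟩ := hw i
    simpa [← hTy] using hy
  have hhull : convexHull ℝ (range w) = T '' convexHull ℝ (range (T.symm ∘ w)) := by
    rw [← T.coe_toAffineMap, AffineMap.image_convexHull, ← range_comp]
    simp [Function.comp_def]
  rw [hhull, toReal_addHaar_image_div_image, one_div]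
  calc _ ≤ ((Real.exp 7 * √(Real.log (1 + s / m) / m)) ^ m) ^ (m⁻¹ : ℝ) :=
        Real.rpow_le_rpow (by positivity)
          (volume_convexHull_div_volume_ball_le (by omega) (by omega) hu) (by positivity)
    _ = _ := Real.pow_rpow_inv_natCast (by positivity) (by omega)

end
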